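/- arXiv:1112.5984 — 9 statements merged into one kernel-verified Lean document; each statement's English description precedes it below -/
import Mathlib

section
/- The Diophantine equation x² + 11^(2k) = y³ with x ≥ 1, y ≥ 1, k ≥ 1, and gcd(x, y) = 1 has exactly one solution: (x, y, k) = (2, 5, 1). -/
/-!
In `ℤ[i]` the factors `x ± 11^k i` are coprime, so `x + 11^k i = (α + β i)^3`, i.e.
`x = α (α² - 3β²)` and `11^k = β (3α² - β²)`. Since `11 ∤ x`, the two factors of `11^k` cannot
both be divisible by `11`, and congruences mod `3` and `11` leave only `β = 1`, `3α² - 1 = 11^k`.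
Then `k = 2m + 1` is odd and `3α² = 11 t² + 1` with `t = 11^m`, so
`(3α² + 11t²) + 2|α|t √33 = (|α|√3 + t√11)²` is a power `ε^N` of the fundamental unit
`ε = 23 + 4√33` of norm one. The `√33`-coordinate `y_N` of `ε^N` has the same `11`-adic valuation
as `N`, so `t ∣ N`, and then `4t² ≤ 4N² ≤ y_N = 2|α|t` forces `2t ≤ |α|`, i.e. `t = 1`.
-/

lemma IsCoprime.of_add_of_mul {R : Type*} [CommRing R] {x y : R}
    (h : IsCoprime (x + y) (x * y)) : IsCoprime x y := by
  have h' : IsCoprime (x + y * 1) y := by simpa using h.of_mul_right_right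
  exact h'.of_add_mul_left_left

lemma Irreducible.isUnit_of_dvd_pow_of_not_dvd {R : Type*} [CommRing R] [IsBezout R] {p u : R}
    (hp : Irreducible p) {k : ℕ} (hu : u ∣ p ^ k) (hpu : ¬p ∣ u) : IsUnit u :=
  (hp.coprime_pow_of_not_dvd k hpu).isUnit_of_dvd' dvd_rfl hu

lemma Int.prime_eleven : Prime (11 : ℤ) := Int.prime_iff_natAbs_prime.2 (by norm_num)

lemma Int.odd_of_sq_add_sq_eq_pow_three {a b c : ℤ} (h : a ^ 2 + b ^ 2 = c ^ 3) (hb : Odd b)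
    (hac : IsCoprime a c) : Odd c := by
  by_contra hc
  obtain ⟨e, rfl⟩ := even_iff_two_dvd.1 (Int.not_odd_iff_even.1 hc)
  have ha4 := Int.sq_mod_four_eq_one_of_odd (Int.isCoprime_two_right.1 hac.of_mul_right_left)
  have hb4 := Int.sq_mod_four_eq_one_of_odd hb
  have hc4 : (2 * e) ^ 3 = 4 * (2 * e ^ 3) := by ring
  omega

namespace GaussianInt

lemma pow_four_eq_one_of_isUnit {u : GaussianInt} (hu : IsUnit u) : u ^ 4 = 1 := by
  have hn := (Zsqrtd.norm_eq_one_iff' (by norm_num) u).2 hu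
  rw [Zsqrtd.norm_def] at hn
  have hab : u.re * u.im = 0 := by
    nlinarith [sq_nonneg u.re, sq_nonneg u.im, mul_self_nonneg (u.re * u.im)]
  ext <;> simp only [pow_succ, pow_zero, one_mul, Zsqrtd.re_mul, Zsqrtd.im_mul, Zsqrtd.re_one,
    Zsqrtd.im_one]
  · linear_combination (u.re * u.re + u.im * u.im + 1) * hn - 8 * u.re * u.im * hab
  · linear_combination 4 * (u.re * u.re - u.im * u.im) * hab

lemma exists_eq_cube_of_sq_add_sq_eq_pow_three {a b c : ℤ} (h : a ^ 2 + b ^ 2 = c ^ 3)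
    (hcop : IsCoprime (2 * a) c) :
    ∃ u v : ℤ, a = u * (u ^ 2 - 3 * v ^ 2) ∧ b = v * (3 * u ^ 2 - v ^ 2) := by
  let z : GaussianInt := ⟨a, b⟩
  have hmul : z * star z = (c : GaussianInt) ^ 3 := by
    rw [← Zsqrtd.norm_eq_mul_conj, Zsqrtd.norm_def, ← Int.cast_pow, ← h]
    push_cast
    ring
  have hadd : z + star z = ((2 * a : ℤ) : GaussianInt) := by
    ext <;> simp [z, two_mul]
  have hz : IsCoprime z (star z) := by
    apply IsCoprime.of_add_of_mul
    rw [hadd, hmul]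
    simpa using (hcop.pow_right (n := 3)).map (Int.castRingHom GaussianInt)
  obtain ⟨w, η, hw⟩ := exists_associated_pow_of_mul_eq_pow' hz hmul
  -- every unit of `ℤ[i]` is a cube, `η = (η³)³`
  have hcube : (w * (η : GaussianInt) ^ 3) ^ 3 = z := by
    rw [← hw, mul_pow, ← pow_mul, show 3 * 3 = 1 + 4 * 2 by rfl, pow_add, pow_mul,
      pow_four_eq_one_of_isUnit η.isUnit, one_pow, mul_one, pow_one]
  generalize w * (η : GaussianInt) ^ 3 = v at hcube
  refine ⟨v.re, v.im, ?_, ?_⟩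
  · have := congrArg Zsqrtd.re hcube
    simp only [pow_succ, pow_zero, one_mul, Zsqrtd.re_mul, Zsqrtd.im_mul] at this
    linear_combination -this
  · have := congrArg Zsqrtd.im hcube
    simp only [pow_succ, pow_zero, one_mul, Zsqrtd.re_mul, Zsqrtd.im_mul] at this
    linear_combination -this

end GaussianInt

namespace Pell.Solution₁

variable {d : ℤ}

lemma x_sq (a : Solution₁ d) : (a ^ 2).x = 1 + 2 * d * a.y ^ 2 := by
  rw [sq, x_mul]
  linear_combination a.prop

lemma y_pow_two_mul_add_one (a : Solution₁ d) (n : ℕ) :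
    (a ^ (2 * n + 1)).y =
      a.y * (2 * n + 1 + 4 * d * ∑ r ∈ Finset.range n, (a ^ (r + 1)).y ^ 2) := by
  induction n with
  | zero => simp
  | succ n ih =>
    have step : (a ^ (2 * (n + 1) + 1)).y =
        (a ^ (2 * n + 1)).y + 2 * (a ^ (2 * (n + 1))).x * a.y := by
      have h : a ^ (2 * n + 1) = a ^ (2 * (n + 1)) * a⁻¹ := by
        rw [eq_mul_inv_iff_mul_eq, ← pow_succ]
        ring_nf
      rw [pow_succ, h, y_mul, y_mul, x_inv, y_inv]
      ring
    rw [step, ih, mul_comm 2 (n + 1), pow_mul, x_sq, Finset.sum_range_succ]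
    push_cast
    ring

end Pell.Solution₁

open Pell

def pell33 : Solution₁ 33 := Solution₁.mk 23 4 (by norm_num)

lemma isFundamental_pell33 : IsFundamental pell33 := by
  refine ⟨by decide, by decide, fun {b} hb => ?_⟩
  have h := b.prop
  change 23 ≤ b.x
  generalize b.x = X at h hb ⊢
  generalize b.y = Y at h
  by_contra! hX
  obtain ⟨hY₁, hY₂⟩ := abs_lt_of_sq_lt_sq' (by nlinarith : Y ^ 2 < 4 ^ 2) (by norm_num)
  interval_cases Y <;> interval_cases X <;> omega

lemma pell33_pow_cast_zmod_eleven (n : ℕ) :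
    ((pell33 ^ n).x : ZMod 11) = 1 ∧ ((pell33 ^ n).y : ZMod 11) = 4 * n := by
  induction n with
  | zero => simp
  | succ n ih =>
    rw [pow_succ, Solution₁.x_mul, Solution₁.y_mul]
    push_cast
    rw [ih.1, ih.2]
    constructor
    · change (1 : ZMod 11) * 23 + 33 * (4 * n * 4) = 1
      ring_nf
      reduce_mod_char
    · change (1 : ZMod 11) * 4 + 4 * n * 23 = 4 * (n + 1)
      ring_nf
      reduce_mod_char

lemma eleven_dvd_of_eleven_dvd_y_pell33_pow {N : ℕ} (h : (11 : ℤ) ∣ (pell33 ^ N).y) : 11 ∣ N := by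
  have h0 := (ZMod.intCast_zmod_eq_zero_iff_dvd _ 11).2 h
  rw [(pell33_pow_cast_zmod_eleven N).2] at h0
  rw [← ZMod.natCast_eq_zero_iff]
  calc (N : ZMod 11) = 3 * (4 * N) := by ring_nf; reduce_mod_char
    _ = 0 := by rw [h0, mul_zero]

lemma eleven_pow_dvd_of_dvd_y_pell33_pow (e : ℕ) :
    ∀ N : ℕ, (11 : ℤ) ^ e ∣ (pell33 ^ N).y → 11 ^ e ∣ N := by
  induction e with
  | zero => simp
  | succ e ih =>
    intro N h
    obtain ⟨m, rfl⟩ :=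
      eleven_dvd_of_eleven_dvd_y_pell33_pow ((dvd_pow_self 11 e.succ_ne_zero).trans h)
    -- `y(ε^(rm)) ≡ 4rm (mod 11)` and `1² + ⋯ + 5² = 55`
    obtain ⟨s, hs⟩ : (11 : ℤ) ∣ ∑ r ∈ Finset.range 5, ((pell33 ^ m) ^ (r + 1)).y ^ 2 := by
      refine (ZMod.intCast_zmod_eq_zero_iff_dvd _ 11).1 ?_
      simp only [← pow_mul, Finset.sum_range_succ, Finset.sum_range_zero]
      push_cast
      simp only [(pell33_pow_cast_zmod_eleven _).2, Nat.cast_mul, Nat.cast_ofNat]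
      ring_nf
      reduce_mod_char
    have hy : (pell33 ^ (11 * m)).y = 11 * ((pell33 ^ m).y * (1 + 132 * s)) := by
      rw [mul_comm, pow_mul, show 11 = 2 * 5 + 1 from rfl, Solution₁.y_pow_two_mul_add_one, hs]
      push_cast
      ring
    rw [hy, pow_succ', mul_dvd_mul_iff_left (by norm_num)] at h
    have hcop : IsCoprime ((11 : ℤ) ^ e) (1 + 132 * s) :=
      IsCoprime.pow_left ⟨-(12 * s), 1, by ring⟩
    rw [pow_succ']
    exact mul_dvd_mul_left 11 (ih m (hcop.dvd_of_dvd_mul_right h))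

lemma four_mul_sq_le_y_pell33_pow (N : ℕ) : 4 * (N : ℤ) ^ 2 ≤ (pell33 ^ N).y := by
  induction N with
  | zero => simp
  | succ N ih =>
    have hx := Solution₁.x_pow_pos (by decide : 0 < pell33.x) N
    rw [pow_succ pell33, Solution₁.y_mul]
    change _ ≤ _ * 4 + _ * 23
    push_cast
    nlinarith

lemma eq_zero_of_three_mul_sq_eq {a : ℤ} {m : ℕ} (h : 3 * a ^ 2 = 11 * (11 ^ m) ^ 2 + 1) :
    m = 0 := by
  set t : ℤ := 11 ^ m
  have ht0 : 0 < t := by positivity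
  have ha0 : a ≠ 0 := by rintro rfl; nlinarith
  let s : Solution₁ 33 := Solution₁.mk (3 * a ^ 2 + 11 * t ^ 2) (2 * |a| * t) (by
    linear_combination (3 * a ^ 2 - 11 * t ^ 2 + 1) * h - 132 * t ^ 2 * sq_abs a)
  obtain ⟨N, hN⟩ := isFundamental_pell33.eq_pow_of_nonneg (a := s)
    (by simp only [s, Solution₁.x_mk]; positivity) (by simp only [s, Solution₁.y_mk]; positivity)
  have hy : (pell33 ^ N).y = 2 * |a| * t := by rw [← hN, Solution₁.y_mk]
  obtain ⟨c, rfl⟩ := eleven_pow_dvd_of_dvd_y_pell33_pow m N (by rw [hy]; exact dvd_mul_left _ _)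
  have hN : t ≤ (11 ^ m * c : ℕ) := by
    rcases Nat.eq_zero_or_pos c with rfl | hc
    · simp [ha0, ht0.ne'] at hy
    · push_cast
      exact le_mul_of_one_le_right ht0.le (by exact_mod_cast hc)
  have hat : 2 * t ≤ |a| := by
    have := four_mul_sq_le_y_pell33_pow (11 ^ m * c)
    rw [hy] at this
    nlinarith
  have ht1 : t ≤ 1 := by nlinarith [sq_abs a]
  by_contra hm
  have : (11 : ℤ) ≤ t := le_self_pow₀ (by norm_num) hm
  omega

lemma eq_one_of_three_mul_sq_sub_one_eq_pow {a : ℤ} {k : ℕ} (h : 3 * a ^ 2 - 1 = 11 ^ k) :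
    k = 1 := by
  have hmod : ((-1) ^ k : ZMod 3) = -1 := by
    have := congrArg (Int.cast : ℤ → ZMod 3) h
    push_cast at this
    rw [show (11 : ZMod 3) = -1 by decide] at this
    rw [← this]
    ring_nf
    reduce_mod_char
  obtain ⟨m, rfl⟩ := (neg_one_pow_eq_neg_one_iff_odd (by decide)).1 hmod
  have hm := eq_zero_of_three_mul_sq_eq (a := a) (m := m) (by linear_combination h)
  omega

lemma eq_one_of_mul_three_mul_sq_sub_sq_eq_pow {α β : ℤ} {k : ℕ} (hk : 1 ≤ k)
    (hα : ¬(11 : ℤ) ∣ α) (h : β * (3 * α ^ 2 - β ^ 2) = 11 ^ k) : β = 1 := by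
  have h11 : ∀ z : ℤ, (11 : ℤ) ∣ z ↔ (z : ZMod 11) = 0 := fun z =>
    (ZMod.intCast_zmod_eq_zero_iff_dvd z 11).symm
  by_cases hβ : (11 : ℤ) ∣ β
  · exfalso
    rw [h11] at hα hβ
    have hc : ¬(11 : ℤ) ∣ 3 * α ^ 2 - β ^ 2 := by
      rw [h11]
      push_cast
      rw [hβ]
      have : ∀ r : ZMod 11, r ≠ 0 → 3 * r ^ 2 - 0 ^ 2 ≠ 0 := by decide
      exact this _ hα
    rcases Int.isUnit_iff.1
      (Int.prime_eleven.irreducible.isUnit_of_dvd_pow_of_not_dvd (Dvd.intro_left _ h) hc)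
      with h1 | h1
    · have h3 := congrArg (Int.cast : ℤ → ZMod 3) h1
      push_cast at h3
      have : ∀ r s : ZMod 3, 3 * r ^ 2 - s ^ 2 ≠ 1 := by decide
      exact this _ _ h3
    · have h3 := congrArg (Int.cast : ℤ → ZMod 11) h1
      push_cast at h3
      rw [hβ] at h3
      have : ∀ r : ZMod 11, 3 * r ^ 2 - 0 ^ 2 ≠ -1 := by decide
      exact this _ h3
  · rcases Int.isUnit_iff.1
      (Int.prime_eleven.irreducible.isUnit_of_dvd_pow_of_not_dvd (Dvd.intro _ h) hβ) with h1 | h1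
    · exact h1
    · subst h1
      have : (11 : ℤ) ≤ 11 ^ k := le_self_pow₀ (by norm_num) (by omega)
      nlinarith

theorem stmt_0_general (x y k : ℕ) (hk : 1 ≤ k)
    (hcop : Nat.gcd x y = 1) :
    x ^ 2 + 11 ^ (2 * k) = y ^ 3 ↔ x = 2 ∧ y = 5 ∧ k = 1 := by
  refine ⟨fun h => ?_, by rintro ⟨rfl, rfl, rfl⟩; norm_num⟩
  have hZ : (x : ℤ) ^ 2 + (11 ^ k) ^ 2 = (y : ℤ) ^ 3 := by
    rw [← pow_mul, mul_comm]
    exact_mod_cast h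
  have hxy : IsCoprime (x : ℤ) y := Nat.isCoprime_iff_coprime.2 hcop
  have h11 : ¬(11 : ℤ) ∣ x := fun hx => by
    have hy : (11 : ℤ) ∣ y := Int.prime_eleven.dvd_of_dvd_pow (n := 3) <| hZ ▸
      dvd_add (dvd_pow hx two_ne_zero) (dvd_pow (dvd_pow_self 11 (by omega)) two_ne_zero)
    have := Int.isUnit_iff.1 (hxy.isUnit_of_dvd' hx hy)
    omega
  have hy : Odd (y : ℤ) := Int.odd_of_sq_add_sq_eq_pow_three hZ (Odd.pow (by decide)) hxy
  obtain ⟨α, β, hα, hβ⟩ := GaussianInt.exists_eq_cube_of_sq_add_sq_eq_pow_three hZ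
    ((Int.isCoprime_two_left.2 hy).mul_left hxy)
  obtain rfl := eq_one_of_mul_three_mul_sq_sub_sq_eq_pow hk
    (fun hα' => h11 (hα ▸ dvd_mul_of_dvd_left hα' _)) hβ.symm
  obtain rfl := eq_one_of_three_mul_sq_sub_one_eq_pow (a := α) (by linear_combination -hβ)
  have hα4 : α ^ 2 = 4 := by linarith
  have hxα : (x : ℤ) = α := by linear_combination hα + α * hα4
  have hx2 : x = 2 := by nlinarith
  subst hx2
  exact ⟨rfl, Nat.pow_left_injective (by norm_num : 3 ≠ 0) (h.symm.trans (by norm_num)), rfl⟩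

theorem stmt_0 (x y k : ℕ) (hx : 1 ≤ x) (hy : 1 ≤ y) (hk : 1 ≤ k)
    (hcop : Nat.gcd x y = 1) :
    x ^ 2 + 11 ^ (2 * k) = y ^ 3 ↔ x = 2 ∧ y = 5 ∧ k = 1 :=
  stmt_0_general x y k hk hcop
end

section
/- Every solution of x² + 11^(2k) = y³ with x ≥ 1, y ≥ 1, k ≥ 1 is of the form (x, y, k) = (2·11^(3λ), 5·11^(2λ), 1 + 3λ) for some nonnegative integer λ. -/
/-!
Write `x = 11^e X` and `y = 11^f Y` with `11 ∤ X, Y`. Comparing 11-adic valuations, either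
`e ≥ k` and `(11^(e-k) X)² + 1 = Y³`, which forces `X = 0` (Euler's `x² + 1 = y³`), or `e < k`,
`2e = 3f` and `X² + 11^(2(k-e)) = Y³` with `11 ∤ X`.

In the latter case, factoring `(X + 11^k i)(X - 11^k i) = Y³` into coprime cubes in `ℤ[i]` gives
`X = a³ - 3ab²` and `11^k = b(3a² - b²)`. As `11 ∤ a`, one factor is `±1`, and congruences mod 3
and mod 11 leave only `b = 1`, that is `3a² = 11^k + 1`. Then `k = 2m + 1` is odd and `(a, 11^m)`
solves `3a² - 11c² = 1`. Along the solutions of this Pell-type equation, `c` is divisible by 11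
only at indices `n ≡ 5 (mod 11)`, and there it is a multiple of `c₅ = 11 · 19094989`; so `11^m` is
a solution only for `m = 0`. Hence `k = 1`, `a² = 4`, `X = 2` and `Y = 5`.
-/

theorem Int.odd_sq_add_sq_of_isCoprime_of_eq_cube {x z y : ℤ} (hxz : IsCoprime x z)
    (h : x ^ 2 + z ^ 2 = y ^ 3) : Odd (x ^ 2 + z ^ 2) := by
  rcases Int.even_or_odd x with hx | hx <;> rcases Int.even_or_odd z with hz | hz
  · exact absurd (hxz.isUnit_of_dvd' hx.two_dvd hz.two_dvd) (by decide)
  · exact (hx.pow_of_ne_zero two_ne_zero).add_odd hz.pow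
  · exact hx.pow.add_even (hz.pow_of_ne_zero two_ne_zero)
  · exfalso
    obtain ⟨r, rfl⟩ := hx
    obtain ⟨s, rfl⟩ := hz
    have h8 := congrArg (Int.cast : ℤ → ZMod 8) h
    push_cast at h8
    revert h8
    generalize (r : ZMod 8) = r'
    generalize (s : ZMod 8) = s'
    generalize (y : ZMod 8) = y'
    revert r' s' y'
    decide

theorem GaussianInt.isCoprime_star {p : GaussianInt} (hp : IsCoprime p.re p.im)
    (hodd : Odd p.norm) : IsCoprime p (star p) := by
  rw [← isRelPrime_iff_isCoprime]
  intro w hwp hwq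
  obtain ⟨u, v, huv⟩ := hp
  have htwo : (2 : GaussianInt) = u * (p + star p) + v * ((p - star p) * ⟨0, -1⟩) := by
    ext <;> simp
    linear_combination -2 * huv
  have hw2 : w.norm ∣ 2 ^ 2 := by
    obtain ⟨t, ht⟩ : w ∣ 2 := htwo ▸ dvd_add (dvd_mul_of_dvd_right (dvd_add hwp hwq) _)
      (dvd_mul_of_dvd_right (dvd_mul_of_dvd_left (dvd_sub hwp hwq) _) _)
    exact ⟨t.norm, by rw [← Zsqrtd.norm_mul, ← ht]; rfl⟩
  have hw_odd : Odd w.norm := by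
    obtain ⟨t, rfl⟩ := hwp
    have : Odd (w.norm * t.norm) := by rwa [← Zsqrtd.norm_mul]
    exact (Int.odd_mul.mp this).1
  have hunit : IsUnit w.norm :=
    (Int.isCoprime_two_right.mpr hw_odd).pow_right.isUnit_of_dvd' dvd_rfl hw2
  exact Zsqrtd.norm_eq_one_iff.mp (Int.isUnit_iff_natAbs_eq.mp hunit)

theorem GaussianInt.units_pow_four (u : GaussianIntˣ) : u ^ 4 = 1 := by
  have hn := (Zsqrtd.norm_eq_one_iff' (by norm_num) (u : GaussianInt)).mpr u.isUnit
  rw [Zsqrtd.norm_def] at hn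
  set r := (u : GaussianInt).re
  set s := (u : GaussianInt).im
  have hrs : r * s = 0 := by nlinarith [sq_nonneg (r - s), sq_nonneg (r + s)]
  ext <;> simp [pow_succ]
  · linear_combination (r * r + s * s + 1) * hn - 8 * r * s * hrs
  · linear_combination 4 * (r * r - s * s) * hrs

theorem Int.exists_eq_of_sq_add_sq_eq_cube {x z y : ℤ} (hxz : IsCoprime x z)
    (h : x ^ 2 + z ^ 2 = y ^ 3) :
    ∃ a b : ℤ, x = a ^ 3 - 3 * a * b ^ 2 ∧ z = 3 * a ^ 2 * b - b ^ 3 := by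
  set p : GaussianInt := ⟨x, z⟩
  have hnorm : p.norm = x ^ 2 + z ^ 2 := by rw [Zsqrtd.norm_def]; ring
  have hmul : p * star p = (y : GaussianInt) ^ 3 := by
    rw [← Zsqrtd.norm_eq_mul_conj, hnorm, h]; push_cast; rfl
  have hcop : IsCoprime p (star p) :=
    GaussianInt.isCoprime_star hxz (hnorm ▸ Int.odd_sq_add_sq_of_isCoprime_of_eq_cube hxz h)
  obtain ⟨d, u, hdu⟩ := exists_associated_pow_of_mul_eq_pow' hcop hmul
  obtain ⟨g, hg⟩ : ∃ g : GaussianInt, g ^ 3 = p := by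
    refine ⟨d * ↑u⁻¹, ?_⟩
    have hu : u⁻¹ ^ 3 = u := by
      calc u⁻¹ ^ 3 = u⁻¹ ^ 3 * u ^ 4 := by rw [GaussianInt.units_pow_four, mul_one]
        _ = u := by group
    rw [← hdu, mul_pow, ← Units.val_pow_eq_pow_val, hu]
  refine ⟨g.re, g.im, ?_, ?_⟩
  · rw [show x = (g ^ 3).re by rw [hg]]
    simp only [pow_succ, pow_zero, one_mul, Zsqrtd.re_mul, Zsqrtd.im_mul]
    ring
  · rw [show z = (g ^ 3).im by rw [hg]]
    simp only [pow_succ, pow_zero, one_mul, Zsqrtd.re_mul, Zsqrtd.im_mul]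
    ring

theorem Int.three_mul_sq_sub_sq_ne_one (a b : ℤ) : 3 * a ^ 2 - b ^ 2 ≠ 1 := by
  intro h
  have h3 := congrArg (Int.cast : ℤ → ZMod 3) h
  push_cast at h3
  revert h3
  generalize (a : ZMod 3) = s
  generalize (b : ZMod 3) = t
  revert s t
  decide

theorem Int.eq_zero_of_sq_add_one_eq_cube {x y : ℤ} (h : x ^ 2 + 1 = y ^ 3) : x = 0 := by
  obtain ⟨a, b, rfl, hb⟩ := Int.exists_eq_of_sq_add_sq_eq_cube (x := x) (z := 1) (y := y)
    isCoprime_one_right (by rw [one_pow]; exact h)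
  rcases Int.isUnit_iff.mp
      (IsUnit.of_mul_eq_one (a := b) (3 * a ^ 2 - b ^ 2) (by linear_combination -hb)) with rfl | rfl
  · exact absurd (by linear_combination -hb) (Int.three_mul_sq_sub_sq_ne_one a 1)
  · obtain rfl : a = 0 := by nlinarith
    ring

/-- `pellSeq n = (a, c)` with `a√3 + c√11 = (2√3 + √11) ^ (2n + 1)`. -/
def pellSeq : ℕ → ℕ × ℕ
  | 0 => (2, 1)
  | n + 1 => (23 * (pellSeq n).1 + 44 * (pellSeq n).2, 12 * (pellSeq n).1 + 23 * (pellSeq n).2)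

theorem exists_pellSeq_eq (a c : ℕ) (h : 3 * a ^ 2 = 11 * c ^ 2 + 1) :
    ∃ n, pellSeq n = (a, c) := by
  induction c using Nat.strong_induction_on generalizing a with
  | _ c ih =>
    rcases lt_or_ge c 7 with hc | hc
    · have ha : a < 12 := by nlinarith
      have hbase : ∀ c < 7, ∀ a < 12, 3 * a ^ 2 = 11 * c ^ 2 + 1 → a = 2 ∧ c = 1 := by
        decide
      obtain ⟨rfl, rfl⟩ := hbase c hc a ha h
      exact ⟨0, rfl⟩
    · have h44 : 44 * c ≤ 23 * a := by nlinarith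
      have h12 : 12 * a ≤ 23 * c := by nlinarith
      have hlt : 23 * c - 12 * a < c := by
        have : 11 * c < 6 * a := by nlinarith
        omega
      have hz : 3 * (a : ℤ) ^ 2 = 11 * c ^ 2 + 1 := by exact_mod_cast h
      obtain ⟨n, hn⟩ := ih _ hlt (23 * a - 44 * c) (by zify [h44, h12]; linear_combination hz)
      refine ⟨n + 1, ?_⟩
      rw [pellSeq, hn]
      ext <;> dsimp only <;> omega

theorem pellSeq_mod_eleven (n : ℕ) :
    (pellSeq n).1 % 11 = 2 ∧ (pellSeq n).2 % 11 = (2 * n + 1) % 11 := by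
  induction n with
  | zero => decide
  | succ n ih => simp only [pellSeq]; omega

/-- The coefficients are those of multiplication by
`(2√3 + √11) ^ 22 = (a₅√3 + c₅√11) ^ 2 = 3a₅² + 11c₅² + 2a₅c₅√33`. -/
theorem pellSeq_snd_add_eleven (m : ℕ) :
    (pellSeq (m + 11)).2 = 6 * (pellSeq 5).1 * (pellSeq 5).2 * (pellSeq m).1
      + (3 * (pellSeq 5).1 ^ 2 + 11 * (pellSeq 5).2 ^ 2) * (pellSeq m).2 := by
  simp only [pellSeq]
  ring

theorem pellSeq_five_snd_dvd (j : ℕ) : (pellSeq 5).2 ∣ (pellSeq (5 + 11 * j)).2 := by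
  induction j with
  | zero => exact dvd_rfl
  | succ j ih =>
    rw [Nat.mul_succ, ← add_assoc, pellSeq_snd_add_eleven]
    exact dvd_add (Dvd.intro_left _ rfl |>.mul_right _) (ih.mul_left _)

theorem pellSeq_snd_ne_eleven_pow (n : ℕ) {m : ℕ} (hm : m ≠ 0) :
    (pellSeq n).2 ≠ 11 ^ m := by
  intro h
  have hn : n = 5 + 11 * (n / 11) := by
    have h11 : (pellSeq n).2 % 11 = 0 := Nat.mod_eq_zero_of_dvd (h ▸ dvd_pow_self 11 hm)
    have := (pellSeq_mod_eleven n).2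
    omega
  have hdvd : 19094989 ∣ 11 ^ m := by
    have := pellSeq_five_snd_dvd (n / 11)
    rw [← hn, h, show (pellSeq 5).2 = 11 * 19094989 by decide] at this
    exact dvd_of_mul_left_dvd this
  have := Nat.Coprime.eq_one_of_dvd (Nat.Coprime.pow_right m (by norm_num)) hdvd
  norm_num at this

theorem eq_one_of_three_mul_sq_eq_eleven_pow_add_one {a k : ℕ} (h : 3 * a ^ 2 = 11 ^ k + 1) :
    k = 1 := by
  obtain ⟨m, rfl⟩ : Odd k := by
    by_contra hk
    obtain ⟨r, rfl⟩ := Nat.not_odd_iff_even.mp hk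
    have h3 := congrArg (Nat.cast : ℕ → ZMod 3) h
    push_cast [← two_mul, pow_mul] at h3
    rw [show (121 : ZMod 3) = 1 by decide, one_pow] at h3
    revert h3
    generalize (a : ZMod 3) = t
    revert t
    decide
  obtain ⟨n, hn⟩ := exists_pellSeq_eq a (11 ^ m) (by rw [h]; ring)
  by_contra hm
  exact pellSeq_snd_ne_eleven_pow n (m := m) (by omega) (congrArg Prod.snd hn)

theorem Int.not_eleven_dvd_three_mul_sq_add_one (a : ℤ) : ¬ 11 ∣ 3 * a ^ 2 + 1 := by
  intro h
  have h11 := (ZMod.intCast_zmod_eq_zero_iff_dvd (3 * a ^ 2 + 1) 11).mpr (by exact_mod_cast h)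
  push_cast at h11
  revert h11
  generalize (a : ZMod 11) = t
  revert t
  decide

theorem Int.eq_one_of_mul_three_mul_sq_sub_sq_eq_eleven_pow {a b : ℤ} {k : ℕ} (hk : k ≠ 0)
    (ha : ¬ 11 ∣ a) (h : b * (3 * a ^ 2 - b ^ 2) = 11 ^ k) : b = 1 := by
  have h11 : Prime (11 : ℤ) := by norm_num
  have isUnit_of_not_dvd {c : ℤ} (hc : c ∣ 11 ^ k) (h11c : ¬ 11 ∣ c) : IsUnit c :=
    ((h11.coprime_iff_not_dvd.mpr h11c).pow_left (m := k)).symm.isUnit_of_dvd' dvd_rfl hc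
  by_cases h11b : 11 ∣ b
  · exfalso
    have h11c : ¬ 11 ∣ 3 * a ^ 2 - b ^ 2 := fun h11c ↦ by
      have : 11 ∣ 3 * a ^ 2 := by
        simpa using dvd_add h11c (dvd_pow h11b two_ne_zero)
      rcases h11.dvd_or_dvd this with h3 | ha2
      · norm_num at h3
      · exact ha (h11.dvd_of_dvd_pow ha2)
    rcases Int.isUnit_iff.mp (isUnit_of_not_dvd (Dvd.intro_left _ h) h11c) with hc | hc
    · exact Int.three_mul_sq_sub_sq_ne_one a b hc
    · exact Int.not_eleven_dvd_three_mul_sq_add_one a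
        (by rw [show 3 * a ^ 2 + 1 = b ^ 2 by linarith]; exact dvd_pow h11b two_ne_zero)
  · rcases Int.isUnit_iff.mp (isUnit_of_not_dvd (Dvd.intro _ h) h11b) with rfl | rfl
    · rfl
    · nlinarith [one_lt_pow₀ (by norm_num : (1 : ℤ) < 11) hk]

theorem eq_of_sq_add_eleven_pow_eq_cube_of_not_dvd {x y k : ℕ} (hk : k ≠ 0) (hx : ¬ 11 ∣ x)
    (h : x ^ 2 + 11 ^ (2 * k) = y ^ 3) : x = 2 ∧ y = 5 ∧ k = 1 := by
  have hxz : IsCoprime (x : ℤ) (11 ^ k) :=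
    ((Prime.coprime_iff_not_dvd (by norm_num)).mpr (by exact_mod_cast hx)).pow_left.symm
  obtain ⟨a, b, hxab, hzab⟩ := Int.exists_eq_of_sq_add_sq_eq_cube (y := y) hxz
    (by rw [← pow_mul, mul_comm k]; exact_mod_cast h)
  have ha : ¬ 11 ∣ a := fun h11a ↦ hx (by
    have : (11 : ℤ) ∣ x := by
      rw [hxab, show a ^ 3 - 3 * a * b ^ 2 = a * (a ^ 2 - 3 * b ^ 2) by ring]
      exact h11a.mul_right _
    exact_mod_cast this)
  obtain rfl : b = 1 :=
    Int.eq_one_of_mul_three_mul_sq_sub_sq_eq_eleven_pow hk ha (by rw [hzab]; ring)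
  have hk1 : k = 1 := eq_one_of_three_mul_sq_eq_eleven_pow_add_one (a := a.natAbs)
    (by zify; rw [sq_abs]; linarith)
  subst hk1
  have ha2 : a ^ 2 = 4 := by linarith
  have hxa : (x : ℤ) = a := by rw [hxab]; linear_combination a * ha2
  obtain rfl : x = 2 := Nat.pow_left_injective two_ne_zero (by zify; rw [hxa, ha2]; norm_num)
  refine ⟨rfl, Nat.pow_left_injective three_ne_zero (by simpa using h.symm), rfl⟩

theorem Nat.not_eleven_dvd_sq_add_one (n : ℕ) : ¬ 11 ∣ n ^ 2 + 1 := by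
  rw [← ZMod.natCast_eq_zero_iff]
  push_cast
  generalize (n : ZMod 11) = t
  revert t
  decide

theorem Nat.eq_and_eq_of_pow_mul_eq_pow_mul {p a b u v : ℕ} (hp : p.Prime) (hu : ¬ p ∣ u)
    (hv : ¬ p ∣ v) (h : p ^ a * u = p ^ b * v) : a = b ∧ u = v := by
  have : Fact p.Prime := ⟨hp⟩
  have hab : a = b := by
    have hval := congrArg (padicValNat p) h
    rwa [padicValNat.mul (pow_ne_zero _ hp.ne_zero) (by rintro rfl; simp at hu),
      padicValNat.mul (pow_ne_zero _ hp.ne_zero) (by rintro rfl; simp at hv),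
      padicValNat.prime_pow, padicValNat.prime_pow, padicValNat.eq_zero_of_not_dvd hu,
      padicValNat.eq_zero_of_not_dvd hv, add_zero, add_zero] at hval
  subst hab
  exact ⟨rfl, Nat.eq_of_mul_eq_mul_left (pow_pos hp.pos a) h⟩

theorem stmt_1_general (x y k : ℕ) (hx : 1 ≤ x)
    (h : x ^ 2 + 11 ^ (2 * k) = y ^ 3) :
    ∃ l : ℕ, x = 2 * 11 ^ (3 * l) ∧ y = 5 * 11 ^ (2 * l) ∧ k = 1 + 3 * l := by
  have h11 : Nat.Prime 11 := by norm_num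
  have hy : y ≠ 0 := by rintro rfl; simp at h
  obtain ⟨e, X, hX, rfl⟩ :=
    Nat.exists_eq_pow_mul_and_not_dvd (n := x) (by omega) 11 (by norm_num)
  obtain ⟨f, Y, hY, rfl⟩ := Nat.exists_eq_pow_mul_and_not_dvd hy 11 (by norm_num)
  have hY3 : ¬ 11 ∣ Y ^ 3 := fun h' ↦ hY (h11.dvd_of_dvd_pow h')
  rcases lt_or_ge e k with hek | hke
  · obtain ⟨d, rfl⟩ := Nat.exists_eq_add_of_lt hek
    have hX' : ¬ 11 ∣ X ^ 2 + 11 ^ (2 * (d + 1)) :=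
      (Nat.dvd_add_left (dvd_pow_self 11 (by omega))).not.mpr
        (fun h' ↦ hX (h11.dvd_of_dvd_pow h'))
    obtain ⟨hef, hXY⟩ := Nat.eq_and_eq_of_pow_mul_eq_pow_mul (a := 2 * e) (b := 3 * f) h11
      hX' hY3 (by linear_combination h)
    obtain ⟨rfl, rfl, hd⟩ := eq_of_sq_add_eleven_pow_eq_cube_of_not_dvd (by omega) hX hXY
    obtain ⟨l, rfl, rfl⟩ : ∃ l, e = 3 * l ∧ f = 2 * l := ⟨e / 3, by omega, by omega⟩
    exact ⟨l, by ring, by ring, by omega⟩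
  · obtain ⟨d, rfl⟩ := Nat.exists_eq_add_of_le hke
    obtain ⟨-, hXY⟩ := Nat.eq_and_eq_of_pow_mul_eq_pow_mul (a := 2 * k) (b := 3 * f) h11
      (Nat.not_eleven_dvd_sq_add_one (11 ^ d * X)) hY3 (by linear_combination h)
    have hX0 : X = 0 := by
      simpa using Int.eq_zero_of_sq_add_one_eq_cube (x := ((11 ^ d * X : ℕ) : ℤ)) (y := Y)
        (by exact_mod_cast hXY)
    exact absurd (hX0 ▸ dvd_zero 11) hX

theorem stmt_1 (x y k : ℕ) (hx : 1 ≤ x) (hy : 1 ≤ y) (hk : 1 ≤ k)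
    (h : x ^ 2 + 11 ^ (2 * k) = y ^ 3) :
    ∃ l : ℕ, x = 2 * 11 ^ (3 * l) ∧ y = 5 * 11 ^ (2 * l) ∧ k = 1 + 3 * l :=
  stmt_1_general x y k hx h
end

section
/- The Diophantine equation x² + 11^(2k) = y⁴ has no solution with x ≥ 1, y ≥ 1, k ≥ 1. -/
/-! From `x ^ 2 + 11 ^ (2 * k) = (y ^ 2) ^ 2` the factors `y ^ 2 - x` and `y ^ 2 + x` are powers
`11 ^ i < 11 ^ j` of `11`, so `2 * y ^ 2 = 11 ^ i * (1 + 11 ^ (j - i))`. Since `1 + 11 ^ (j - i)` is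
prime to `11`, the exponent `i` is even and dividing out `11 ^ i` leaves
`2 * z ^ 2 = 1 + 11 ^ (j - i)`, i.e. `z ^ 2 ≡ 6 [MOD 11]`, but `6` is not a square modulo `11`. -/

theorem Nat.Prime.dvd_of_dvd_mul_sq {p a y : ℕ} (hp : p.Prime) (ha : ¬ p ∣ a)
    (h : p ∣ a * y ^ 2) : p ∣ y :=
  hp.dvd_of_dvd_pow ((hp.dvd_mul.mp h).resolve_left ha)

theorem Nat.Prime.exists_mul_sq_eq_of_mul_sq_eq_pow_mul {p a b : ℕ} (hp : p.Prime) (ha : ¬ p ∣ a)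
    (hb : ¬ p ∣ b) : ∀ {i y : ℕ}, a * y ^ 2 = p ^ i * b → ∃ z, a * z ^ 2 = b
  | 0, y, h => ⟨y, by simpa using h⟩
  | 1, y, h => by
    obtain ⟨w, rfl⟩ := hp.dvd_of_dvd_mul_sq ha ⟨b, by simpa using h⟩
    have hw : p * (a * p * w ^ 2) = p * b := by rw [← pow_one p, ← h]; ring
    exact absurd ⟨a * w ^ 2, by rw [← Nat.eq_of_mul_eq_mul_left hp.pos hw]; ring⟩ hb
  | i + 2, y, h => by
    obtain ⟨w, rfl⟩ := hp.dvd_of_dvd_mul_sq ha ⟨p ^ (i + 1) * b, by rw [h]; ring⟩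
    have hw : p ^ 2 * (a * w ^ 2) = p ^ 2 * (p ^ i * b) := by
      rw [show p ^ 2 * (p ^ i * b) = p ^ (i + 2) * b by ring, ← h]; ring
    exact hp.exists_mul_sq_eq_of_mul_sq_eq_pow_mul ha hb
      (Nat.eq_of_mul_eq_mul_left (pow_pos hp.pos 2) hw)

theorem Nat.Prime.exists_two_mul_eq_pow_mul_of_sq_add_pow_eq_sq {p x b n : ℕ} (hp : p.Prime)
    (hx : x ≠ 0) (h : x ^ 2 + p ^ n = b ^ 2) : ∃ i t, t ≠ 0 ∧ 2 * b = p ^ i * (1 + p ^ t) := by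
  have hxb : x < b := by nlinarith [pow_pos hp.pos n]
  obtain ⟨d, rfl⟩ := Nat.exists_eq_add_of_lt hxb
  have hfac : (d + 1) * (2 * x + d + 1) = p ^ n := by nlinarith
  obtain ⟨i, -, hi⟩ := (Nat.dvd_prime_pow hp).mp (Dvd.intro _ hfac)
  obtain ⟨j, -, hj⟩ := (Nat.dvd_prime_pow hp).mp (Dvd.intro_left _ hfac)
  have hij : i < j := (Nat.pow_lt_pow_iff_right hp.one_lt).mp (by omega)
  obtain ⟨t, rfl⟩ := Nat.exists_eq_add_of_lt hij
  have hsum : p ^ i * (1 + p ^ (t + 1)) = p ^ i + p ^ (i + t + 1) := by ring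
  exact ⟨i, t + 1, t.succ_ne_zero, by omega⟩

theorem two_mul_sq_ne_one_add_eleven_pow (z : ℕ) {t : ℕ} (ht : t ≠ 0) :
    2 * z ^ 2 ≠ 1 + 11 ^ t := by
  intro h
  have h11 := congrArg (Nat.cast : ℕ → ZMod 11) h
  push_cast at h11
  rw [show (11 : ZMod 11) = 0 from rfl, zero_pow ht, add_zero] at h11
  revert h11
  generalize (z : ZMod 11) = w
  revert w
  decide

theorem stmt_2 : ¬ ∃ x y k : ℕ, 1 ≤ x ∧ 1 ≤ y ∧ 1 ≤ k ∧
    x ^ 2 + 11 ^ (2 * k) = y ^ 4 := by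
  rintro ⟨x, y, k, hx, -, -, h⟩
  have hp : Nat.Prime 11 := by norm_num
  obtain ⟨i, t, ht, hy⟩ := hp.exists_two_mul_eq_pow_mul_of_sq_add_pow_eq_sq (x := x) (b := y ^ 2)
    (by omega) (by rw [h, ← pow_mul])
  have hcop : ¬ 11 ∣ 1 + 11 ^ t := (Nat.dvd_add_left (dvd_pow_self 11 ht)).not.mpr (by norm_num)
  obtain ⟨z, hz⟩ := hp.exists_mul_sq_eq_of_mul_sq_eq_pow_mul (by norm_num) hcop hy
  exact two_mul_sq_ne_one_add_eleven_pow z ht hz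
end

section
/- If x, y, k are positive integers with gcd(x, y) = 1 and x² + 11^(2k) = y³, then there exist integers u, v with x + 11^k·i = (u + v·i)³ in ℤ[i]. -/
/-!
Write `z = x + 11ᵏ i`. Then `z · z̄ = x² + 11²ᵏ = y³`, and `z + z̄ = 2x` is coprime to `y³`
because `x` is coprime to `y` and `y` is odd (an even `y` would force `x² ≡ -1 mod 4`).
Hence `z` and `z̄` are coprime in the UFD `ℤ[i]`, so `z` is a unit times a cube; every unit of
`ℤ[i]` has order dividing `4`, hence is a cube.
-/

theorem IsCoprime.of_add_mul {R : Type*} [CommRing R] {a b : R}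
    (h : IsCoprime (a + b) (a * b)) : IsCoprime a b := by
  have ha : IsCoprime a (b + a * 1) := by
    rw [add_comm, mul_one]
    exact (IsCoprime.mul_right_iff.mp h).1.symm
  exact IsCoprime.add_mul_left_right_iff.mp ha

theorem Zsqrtd.isCoprime_star {d : ℤ} {z : ℤ√d} (h : IsCoprime (2 * z.re) z.norm) :
    IsCoprime z (star z) := by
  have h' := h.intCast (R := ℤ√d)
  rw [Zsqrtd.norm_eq_mul_conj] at h'
  refine IsCoprime.of_add_mul ?_
  convert h' using 1
  ext <;> simp [two_mul]

theorem GaussianInt.exists_pow_three_eq_unit (u : GaussianIntˣ) :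
    ∃ w : GaussianInt, w ^ 3 = u := by
  refine ⟨↑(u ^ 3), ?_⟩
  rw [← Units.val_pow_eq_pow_val, ← pow_mul,
    show 3 * 3 = 4 * 2 + 1 by rfl, pow_succ, pow_mul, GaussianInt.units_pow_four, one_pow, one_mul]

theorem Int.odd_of_sq_add_sq_eq_pow_three_s7 {x c y : ℤ} (hc : Odd c) (h : x ^ 2 + c ^ 2 = y ^ 3) :
    Odd y := by
  by_contra hy
  obtain ⟨m, rfl⟩ := Int.not_odd_iff_even.mp hy
  obtain ⟨n, rfl⟩ := hc
  have h4 := congrArg (fun t : ℤ => (t : ZMod 4)) h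
  push_cast at h4
  have hmod4 : ∀ a b c : ZMod 4, a ^ 2 + (2 * b + 1) ^ 2 ≠ (c + c) ^ 3 := by decide
  exact hmod4 _ _ _ h4

theorem stmt_7_general (x y : ℤ) (k : ℕ)
    (hcop : IsCoprime x y) (h : x ^ 2 + 11 ^ (2 * k) = y ^ 3) :
    ∃ u v : ℤ, (⟨x, 11 ^ k⟩ : GaussianInt) = (⟨u, v⟩ : GaussianInt) ^ 3 := by
  set z : GaussianInt := ⟨x, 11 ^ k⟩
  have hnorm : z.norm = y ^ 3 := by
    rw [Zsqrtd.norm_def, ← h]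
    change x * x - -1 * 11 ^ k * 11 ^ k = _
    ring
  have hy_odd : Odd y := by
    refine Int.odd_of_sq_add_sq_eq_pow_three_s7 (x := x) (c := 11 ^ k) (Odd.pow (by decide)) ?_
    rwa [← pow_mul, mul_comm k 2]
  have h2xy : IsCoprime (2 * z.re) z.norm := by
    rw [hnorm]
    exact ((Int.isCoprime_two_left.mpr hy_odd).mul_left hcop).pow_right
  have hzz : z * star z = (y : GaussianInt) ^ 3 := by
    rw [← Zsqrtd.norm_eq_mul_conj, hnorm, Int.cast_pow]
  obtain ⟨d, u, hu⟩ := exists_associated_pow_of_mul_eq_pow' (Zsqrtd.isCoprime_star h2xy) hzz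
  obtain ⟨w, hw⟩ := GaussianInt.exists_pow_three_eq_unit u
  exact ⟨(d * w).re, (d * w).im, by rw [← hu, ← hw, ← mul_pow]⟩

theorem stmt_7 (x y : ℤ) (k : ℕ) (hx : 1 ≤ x) (hy : 1 ≤ y) (hk : 1 ≤ k)
    (hcop : IsCoprime x y) (h : x ^ 2 + 11 ^ (2 * k) = y ^ 3) :
    ∃ u v : ℤ, (⟨x, 11 ^ k⟩ : GaussianInt) = (⟨u, v⟩ : GaussianInt) ^ 3 :=
  stmt_7_general x y k hcop h
end

section
/- Define y_r by y_{-1} = −1, y_0 = 1, y_{r+1} = 46·y_r − y_{r-1}. The only indices r with y_r = ±11^m for some nonnegative integer m are those giving m = 0 (i.e., y_r = ±1). -/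
/-!
Write `y r = S r (46) + S (r - 1) (46)` with the rescaled Chebyshev polynomials `S`; then
`y r` divides `S (2r) (46) = S r (46) ^ 2 - S (r - 1) (46) ^ 2`. For a prime `p > 3` and
`x ≡ 2 (mod p)`, the values `S (n - 1) (x)` behave like `S (n - 1) (2) = n` with respect to
`p`-divisibility: the factorisation `S (pk - 1) = S (p - 1) ∘ C k * S (k - 1)` and the congruence
`S (p - 1) (2 + pt) ≡ p (mod p²)` show that `p ^ m ∣ S (n - 1) (x)` forces `p ^ m ∣ n`.
So `y r = ±11 ^ m` gives `11 ^ m ≤ |2r + 1|`, whereas `|y r| > |2r + 1|` unless `r ∈ {0, -1}`,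
where `y r = ±1`.
-/

open Polynomial

theorem Nat.Prime.dvd_choose_add_one_three {p : ℕ} (hp : p.Prime) (hp3 : 3 < p) :
    p ∣ (p + 1).choose 3 := by
  have h : p ∣ (p + 1).choose 3 * 3 := by
    rw [← Nat.add_one_mul_choose_eq]
    exact (hp.dvd_choose_self two_ne_zero (by omega)).mul_left _
  exact (hp.dvd_mul.mp h).resolve_right fun h3 => by
    have := Nat.le_of_dvd three_pos h3
    omega

namespace Polynomial.Chebyshev

section CommRing

variable (R : Type*) [CommRing R]

theorem C_mul_S (n a : ℤ) : C R n * S R a = S R (a + n) + S R (a - n) := by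
  induction n using Polynomial.Chebyshev.induct with
  | zero => simp [two_mul]
  | one => rw [C_one, S_add_one]; ring_nf
  | add_two n ih1 ih2 =>
    have h₁ := S_add_two R (a + n)
    have h₂ := S_sub_two R (a - n)
    linear_combination (norm := ring_nf)
      S R a * C_add_two R n - h₂ - h₁ - ih2 + (X : R[X]) * ih1
  | neg_add_one n ih1 ih2 =>
    have h₁ := S_add_two R (a + (-n - 1))
    have h₂ := S_sub_two R (a - (-n - 1))
    linear_combination (norm := ring_nf)
      S R a * C_add_two R (-n - 1) - h₂ - h₁ - ih2 + (X : R[X]) * ih1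

theorem S_mul_sub_one (m n : ℤ) :
    S R (m * n - 1) = (S R (m - 1)).comp (C R n) * S R (n - 1) := by
  induction m using Polynomial.Chebyshev.induct with
  | zero => simp
  | one => simp
  | add_two m ih1 ih2 =>
    have h₁ := C_mul_S R n ((m + 1) * n - 1)
    have h₂ := congr_arg (comp · (C R n)) <| S_add_two R (m - 1)
    simp only [sub_comp, mul_comp, X_comp] at h₂
    linear_combination (norm := ring_nf) -ih2 - h₂ * S R (n - 1) - h₁ + C R n * ih1
  | neg_add_one m ih1 ih2 =>
    have h₁ := C_mul_S R n (-m * n - 1)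
    have h₂ := congr_arg (comp · (C R n)) <| S_add_two R (-m - 2)
    simp only [sub_comp, mul_comp, X_comp] at h₂
    linear_combination (norm := ring_nf) -ih2 - h₂ * S R (n - 1) - h₁ + C R n * ih1

theorem S_two_mul (n : ℤ) : S R (2 * n) = S R n ^ 2 - S R (n - 1) ^ 2 := by
  have h := C_mul_S R n n
  rw [sub_self, S_zero, ← two_mul] at h
  linear_combination (norm := ring_nf)
    -h + S R n * C_eq_S_sub_X_mul_S R n + S_sq_add_S_sq R (n - 1)

variable {R}

/-- First-order Taylor expansion at `2`: `S (n - 1) (2) = n` and `S (n - 1)' (2) = C(n + 1, 3)`. -/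
theorem sq_dvd_eval_S_sub_one_two_add (t : R) (n : ℕ) :
    t ^ 2 ∣ (S R (n - 1)).eval (2 + t) - n - ((n + 1).choose 3 : R) * t := by
  induction n using Nat.twoStepInduction with
  | zero => simp [Nat.choose_eq_zero_of_lt]
  | one => simp
  | more n ih₀ ih₁ =>
    obtain ⟨a, ha⟩ := ih₀
    obtain ⟨b, hb⟩ := ih₁
    have hchoose :
        ((n + 3).choose 3 : R) = 2 * (n + 2).choose 3 - (n + 1).choose 3 + n + 1 := by
      rw [Nat.choose_succ_succ (n + 2) 2, Nat.choose_succ_succ (n + 1) 1,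
        Nat.choose_succ_succ (n + 1) 2, Nat.choose_one_right]
      push_cast
      ring
    refine ⟨(n + 2).choose 3 + (2 + t) * b - a, ?_⟩
    push_cast at hb ⊢
    rw [show (n : ℤ) + 1 - 1 = n by ring] at hb
    rw [show (n : ℤ) + 2 - 1 = n + 1 by ring, S_add_one, hchoose]
    simp only [eval_sub, eval_mul, eval_X]
    linear_combination (2 + t) * hb - ha

theorem dvd_eval_S_sub_one_sub {p x : R} (hx : p ∣ x - 2) (n : ℤ) :
    p ∣ (S R (n - 1)).eval x - n := by
  simpa using hx.trans (sub_dvd_eval_sub x 2 (S R (n - 1)))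

theorem dvd_eval_C_sub_two {p x : R} (hx : p ∣ x - 2) (n : ℤ) : p ∣ (C R n).eval x - 2 := by
  simpa using hx.trans (sub_dvd_eval_sub x 2 (C R n))

theorem eq_eval_S_of_recurrence {x : R} {y : ℤ → R}
    (hrec : ∀ r, y (r + 1) = x * y r - y (r - 1)) (r : ℤ) :
    y r = y 0 * (S R r).eval x - y (-1) * (S R (r - 1)).eval x := by
  induction r using Polynomial.Chebyshev.induct with
  | zero => simp
  | one => simpa [mul_comm] using hrec 0
  | add_two n ih₁ ih₀ =>
    have h := hrec (n + 1)
    simp only [add_sub_cancel_right, add_assoc, one_add_one_eq_two] at h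
    rw [h, ih₁, ih₀, show (n : ℤ) + 2 - 1 = n + 1 by ring, S_add_two, S_add_one]
    simp only [eval_sub, eval_mul, eval_X, add_sub_cancel_right]
    ring
  | neg_add_one n ih₀ ih₁ =>
    have h := hrec (-n)
    rw [ih₁, ih₀, show -(n : ℤ) + 1 - 1 = -n by ring] at h
    rw [show -(n : ℤ) - 1 - 1 = -n - 2 by ring, S_sub_one, S_sub_two]
    simp only [eval_sub, eval_mul, eval_X]
    linear_combination h

end CommRing

theorem sq_dvd_eval_S_sub_one_sub {p : ℕ} (hp : p.Prime) (hp3 : 3 < p) {w : ℤ}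
    (hw : (p : ℤ) ∣ w - 2) :
    (p : ℤ) ^ 2 ∣ (S ℤ (p - 1)).eval w - p := by
  obtain ⟨t, ht⟩ := hw
  obtain ⟨c, hc⟩ := hp.dvd_choose_add_one_three hp3
  obtain ⟨a, ha⟩ := sq_dvd_eval_S_sub_one_two_add ((p : ℤ) * t) p
  refine ⟨t ^ 2 * a + c * t, ?_⟩
  rw [show w = 2 + p * t by linarith]
  push_cast [hc] at ha
  linear_combination ha

theorem pow_dvd_of_pow_dvd_eval_S {p : ℕ} (hp : p.Prime) (hp3 : 3 < p) {x : ℤ}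
    (hx : (p : ℤ) ∣ x - 2) (m : ℕ) :
    ∀ n : ℤ, (p : ℤ) ^ m ∣ (S ℤ (n - 1)).eval x → (p : ℤ) ^ m ∣ n := by
  induction m with
  | zero => simp
  | succ m ih =>
    intro n hn
    have hpn : (p : ℤ) ∣ n := by
      have := (dvd_pow_self (p : ℤ) m.succ_ne_zero).trans hn
      simpa using dvd_sub this (dvd_eval_S_sub_one_sub hx n)
    obtain ⟨k, rfl⟩ := hpn
    obtain ⟨s, hs⟩ := sq_dvd_eval_S_sub_one_sub hp hp3 (dvd_eval_C_sub_two hx k)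
    have hfactor :
        (S ℤ (p * k - 1)).eval x = p * ((1 + p * s) * (S ℤ (k - 1)).eval x) := by
      rw [S_mul_sub_one, eval_mul, eval_comp]
      linear_combination (S ℤ (k - 1)).eval x * hs
    rw [hfactor, pow_succ', mul_dvd_mul_iff_left (by exact_mod_cast hp.ne_zero)] at hn
    have hcop : IsCoprime ((p : ℤ) ^ m) (1 + p * s) := IsCoprime.pow_left ⟨-s, 1, by ring⟩
    rw [pow_succ']
    exact mul_dvd_mul_left _ (ih k (hcop.dvd_of_dvd_mul_left hn))

theorem two_mul_add_one_le_eval_S {x : ℤ} (hx : 3 ≤ x) (n : ℕ) :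
    2 * n + 1 ≤ (S ℤ n).eval x := by
  suffices h : ∀ n : ℕ,
      2 * n + 1 ≤ (S ℤ n).eval x ∧ (S ℤ n).eval x + 2 ≤ (S ℤ (n + 1)).eval x from
    (h n).1
  intro n
  induction n with
  | zero => norm_num [hx]
  | succ n ih =>
    have hrec :
        (S ℤ ((n + 1 : ℕ) + 1)).eval x = x * (S ℤ (n + 1)).eval x - (S ℤ n).eval x := by
      rw [S_add_one]
      simp
    push_cast at hrec ⊢
    constructor <;> nlinarith

theorem abs_eval_S_add_eval_S_sub_one {x : ℤ} (hx : 3 ≤ x) (r : ℤ) :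
    |(S ℤ r).eval x + (S ℤ (r - 1)).eval x| = 1 ∨
      |2 * r + 1| < |(S ℤ r).eval x + (S ℤ (r - 1)).eval x| := by
  have hnat (n : ℕ) : |(S ℤ n).eval x + (S ℤ (n - 1)).eval x| = 1 ∨
      |2 * (n : ℤ) + 1| < |(S ℤ n).eval x + (S ℤ (n - 1)).eval x| := by
    rcases n with _ | n
    · simp
    · right
      have h₁ := two_mul_add_one_le_eval_S hx (n + 1)
      have h₀ := two_mul_add_one_le_eval_S hx n
      push_cast at h₁ ⊢
      rw [add_sub_cancel_right, abs_of_nonneg (by positivity : (0 : ℤ) ≤ 2 * (n + 1) + 1),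
        abs_of_nonneg (by linarith)]
      linarith
  rcases le_or_gt 0 r with hr | hr
  · lift r to ℕ using hr
    exact hnat r
  · obtain ⟨n, rfl⟩ : ∃ n : ℕ, r = -n - 1 := ⟨(-r - 1).toNat, by omega⟩
    rw [sub_sub, one_add_one_eq_two, S_neg_sub_one, S_neg_sub_two, eval_neg, eval_neg,
      ← neg_add, abs_neg, add_comm, show 2 * (-(n : ℤ) - 1) + 1 = -(2 * n + 1) by ring,
      abs_neg]
    exact hnat n

end Polynomial.Chebyshev

open Polynomial.Chebyshev in
theorem stmt_14 (y : ℤ → ℤ) (hm1 : y (-1) = -1) (h0 : y 0 = 1)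
    (hrec : ∀ r : ℤ, y (r + 1) = 46 * y r - y (r - 1)) (r : ℤ) (m : ℕ)
    (h : y r = 11 ^ m ∨ y r = -(11 ^ m)) : m = 0 := by
  have hy : y r = (S ℤ r).eval 46 + (S ℤ (r - 1)).eval 46 := by
    simpa [h0, hm1] using eq_eval_S_of_recurrence hrec r
  have habs : |y r| = 11 ^ m := by
    rcases h with h | h <;> simp [h]
  have hdvd : (11 : ℤ) ^ m ∣ 2 * r + 1 := by
    refine pow_dvd_of_pow_dvd_eval_S (p := 11) (x := 46) (by norm_num) (by norm_num)
      (by norm_num) m _ ?_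
    refine habs ▸ (abs_dvd_self (y r)).trans ⟨(S ℤ r).eval 46 - (S ℤ (r - 1)).eval 46, ?_⟩
    rw [add_sub_cancel_right, S_two_mul, hy]
    simp only [eval_sub, eval_pow]
    ring
  rcases abs_eval_S_add_eval_S_sub_one (by norm_num : (3 : ℤ) ≤ 46) r with h1 | hlt
  · rw [← hy, habs] at h1
    exact pow_right_injective₀ (by norm_num : (0 : ℤ) < 11) (by norm_num)
      (h1.trans (pow_zero _).symm)
  · have hle := Int.le_of_dvd (abs_pos.mpr (by omega)) ((dvd_abs _ _).mpr hdvd)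
    rw [← hy, habs] at hlt
    exact absurd hlt (not_lt.mpr hle)
end

section
/- The Pell equation X² − 3Y² = 1 has no solution in positive integers X, Y with X a power of 11 (i.e., X = 11^k for some k ≥ 1). -/
/-- Modulo 11 the equation becomes `-3 y² = 1`, i.e. `y² = 7`, and 7 is not a square mod 11. -/
theorem Int.sq_sub_three_mul_sq_ne_one_of_eleven_dvd {x : ℤ} (hx : 11 ∣ x) (y : ℤ) :
    x ^ 2 - 3 * y ^ 2 ≠ 1 := by
  intro h
  have hx0 : (x : ZMod 11) = 0 := (ZMod.intCast_zmod_eq_zero_iff_dvd x 11).2 hx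
  have h11 : ((x ^ 2 - 3 * y ^ 2 : ℤ) : ZMod 11) = 1 := by rw [h, Int.cast_one]
  push_cast [hx0] at h11
  have no_root : ∀ z : ZMod 11, 0 ^ 2 - 3 * z ^ 2 ≠ 1 := by decide
  exact no_root _ h11

theorem stmt_15 : ¬ ∃ (X Y : ℤ) (k : ℕ), 0 < X ∧ 0 < Y ∧ 1 ≤ k ∧
    X = 11 ^ k ∧ X ^ 2 - 3 * Y ^ 2 = 1 := by
  rintro ⟨X, Y, k, -, -, hk, rfl, h⟩
  exact Int.sq_sub_three_mul_sq_ne_one_of_eleven_dvd (dvd_pow_self 11 (by omega)) Y h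
end

section
/- The negative Pell equation X² − 2Y² = −1 has no solution in positive integers X, Y with X = 11^k for some positive integer k. -/
/-! Modulo any divisor `n` of `X`, the equation `X² - 2Y² = -1` gives `2Y² ≡ 1`, so that
`2 ≡ (2Y)²` is a square mod `n`. For `X = 11^k` this fails: `2` is not a square mod `11`,
as `11 ≡ 3 (mod 8)`. -/

theorem isSquare_two_of_dvd_of_sq_sub_two_mul_sq_eq_neg_one {n : ℕ} {X Y : ℤ}
    (hX : (n : ℤ) ∣ X) (h : X ^ 2 - 2 * Y ^ 2 = -1) : IsSquare (2 : ZMod n) := by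
  have hX0 : (X : ZMod n) = 0 := (ZMod.intCast_zmod_eq_zero_iff_dvd X n).mpr hX
  have hmod := congrArg (Int.cast : ℤ → ZMod n) h
  push_cast [hX0] at hmod
  exact ⟨2 * Y, by linear_combination 2 * hmod⟩

theorem not_isSquare_two_zmod_eleven : ¬ IsSquare (2 : ZMod 11) := by
  have : Fact (Nat.Prime 11) := ⟨by norm_num⟩
  rw [ZMod.exists_sq_eq_two_iff (by norm_num)]
  norm_num

theorem stmt_16 : ¬ ∃ (X Y : ℤ) (k : ℕ), 0 < X ∧ 0 < Y ∧ 1 ≤ k ∧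
    X = 11 ^ k ∧ X ^ 2 - 2 * Y ^ 2 = -1 := by
  rintro ⟨X, Y, k, -, -, hk, rfl, h⟩
  have h11 : ((11 : ℕ) : ℤ) ∣ 11 ^ k := dvd_pow_self 11 (by omega)
  exact not_isSquare_two_zmod_eleven (isSquare_two_of_dvd_of_sq_sub_two_mul_sq_eq_neg_one h11 h)
end

section
/- If x, y, k are positive integers with gcd(x, y) = 1 and p ≥ 5 is a prime with x² + 11^(2k) = y^p, then there exist integers u, v such that x + 11^k·i = (u + v·i)^p in ℤ[i] and v divides 11^k. -/
/-!
Since `x² + 11^(2k) = y^p` with `p ≥ 2`, reducing mod 4 forces `y` to be odd, so `y^p` is prime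
to `2x`. In `ℤ[i]` the equation reads `z · z̄ = y^p` with `z = x + 11^k i`; a common factor of
`z` and `z̄` would divide both `y^p` and `z + z̄ = 2x`, so `z` and `z̄` are coprime and `z` is a
`p`-th power up to a unit. The units of `ℤ[i]` satisfy `u⁴ = 1` and `p` is odd, so every unit is
itself a `p`-th power and `z = (u + v i)^p`. Finally `v ∣ 11^k` because `v` divides the imaginary
part of every power of `u + v i`.
-/

open Zsqrtd GaussianInt

theorem Int.odd_of_sq_add_sq_eq_pow {x y z : ℤ} {n : ℕ} (hz : Odd z) (hn : 2 ≤ n)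
    (h : x ^ 2 + z ^ 2 = y ^ n) : Odd y := by
  by_contra hy
  obtain ⟨t, rfl⟩ := Int.not_odd_iff_even.1 hy
  have h4 : (4 : ℤ) ∣ (t + t) ^ n := by
    rw [← two_mul, mul_pow]
    exact (pow_dvd_pow 2 hn).mul_right _
  have hz4 := Int.sq_mod_four_eq_one_of_odd hz
  rcases Int.even_or_odd x with ⟨s, rfl⟩ | hx
  · have : (s + s) ^ 2 = 4 * (s * s) := by ring
    omega
  · have := Int.sq_mod_four_eq_one_of_odd hx
    omega

theorem Zsqrtd.im_dvd_im_pow {d : ℤ} (c : ℤ√d) (n : ℕ) : c.im ∣ (c ^ n).im := by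
  have h : (c.im : ℤ√d) ∣ c - c.re := ⟨sqrtd, by ext <;> simp⟩
  have h' : (c.im : ℤ√d) ∣ c ^ n - (c.re ^ n : ℤ) := by
    push_cast
    exact h.trans (sub_dvd_pow_sub_pow _ _ n)
  simpa only [im_sub, im_intCast, sub_zero] using ((intCast_dvd _ _).1 h').2

theorem Zsqrtd.isCoprime_star_of_isCoprime_norm {d : ℤ} {z : ℤ√d}
    (h : IsCoprime z.norm (2 * z.re)) : IsCoprime z (star z) := by
  have h' : IsCoprime (z * star z) ((2 * z.re : ℤ) : ℤ√d) := by
    rw [← norm_eq_mul_conj]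
    exact h.map (Int.castRingHom (ℤ√d))
  have hre : ((2 * z.re : ℤ) : ℤ√d) = star z + z * 1 := by ext <;> simp [two_mul]
  rw [hre] at h'
  exact h'.of_mul_left_left.of_add_mul_left_right

theorem GaussianInt.pow_four_eq_one_of_isUnit_s17 {z : GaussianInt} (hz : IsUnit z) : z ^ 4 = 1 := by
  have hnorm : z.re * z.re + z.im * z.im = 1 := by
    simpa [norm_def] using (norm_eq_one_iff' (by norm_num) z).2 hz
  have hreim : z.re * z.im = 0 := by
    obtain ⟨hre₁, hre₂⟩ : -1 ≤ z.re ∧ z.re ≤ 1 := by constructor <;> nlinarith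
    obtain ⟨him₁, him₂⟩ : -1 ≤ z.im ∧ z.im ≤ 1 := by constructor <;> nlinarith
    interval_cases z.re <;> interval_cases z.im <;> omega
  ext <;> simp only [pow_succ, pow_zero, one_mul, re_mul, im_mul, re_one, im_one]
  · linear_combination (z.re * z.re + z.im * z.im + 1) * hnorm - 8 * z.re * z.im * hreim
  · linear_combination 4 * (z.re * z.re - z.im * z.im) * hreim

theorem GaussianInt.exponent_units_dvd_four : Monoid.exponent GaussianIntˣ ∣ 4 :=
  Monoid.exponent_dvd_of_forall_pow_eq_one fun u =>
    Units.ext (by simpa using pow_four_eq_one_of_isUnit_s17 u.isUnit)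

theorem Associated.exists_pow_eq_of_coprime_exponent {M : Type*} [CommMonoid M] {p : ℕ}
    (hp : p.Coprime (Monoid.exponent Mˣ)) {a b : M} (h : Associated (a ^ p) b) :
    ∃ c, c ^ p = b := by
  obtain ⟨u, rfl⟩ := h
  obtain ⟨m, hm⟩ :=
    exists_pow_eq_self_of_coprime (hp.coprime_dvd_right (Monoid.order_dvd_exponent u))
  refine ⟨a * ↑(u ^ m), ?_⟩
  rw [mul_pow, ← Units.val_pow_eq_pow_val, ← pow_mul, mul_comm m, pow_mul, hm]

theorem stmt_17_general (x y : ℤ) (k p : ℕ)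
    (hp : p.Prime) (hp5 : 5 ≤ p) (hcop : IsCoprime x y)
    (h : x ^ 2 + 11 ^ (2 * k) = y ^ p) :
    ∃ u v : ℤ, (⟨x, 11 ^ k⟩ : GaussianInt) = (⟨u, v⟩ : GaussianInt) ^ p ∧
      v ∣ (11 : ℤ) ^ k := by
  set z : GaussianInt := ⟨x, 11 ^ k⟩
  have hnorm : z.norm = y ^ p := by
    rw [norm_def, ← h]
    ring
  have hy_odd : Odd y :=
    Int.odd_of_sq_add_sq_eq_pow (z := 11 ^ k) (Odd.pow (by decide)) hp.two_le (by rw [← h]; ring)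
  have hz_coprime : IsCoprime z (star z) := by
    refine isCoprime_star_of_isCoprime_norm ?_
    rw [hnorm]
    exact ((Int.isCoprime_two_right.2 hy_odd).mul_right hcop.symm).pow_left
  obtain ⟨d, hd⟩ := exists_associated_pow_of_mul_eq_pow' hz_coprime
    (by rw [← norm_eq_mul_conj, hnorm]; push_cast; rfl)
  have hp4 : p.Coprime 4 :=
    (Nat.coprime_two_right.2 (hp.odd_of_ne_two (by omega))).pow_right 2
  obtain ⟨c, hc⟩ :=
    hd.exists_pow_eq_of_coprime_exponent (hp4.coprime_dvd_right exponent_units_dvd_four)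
  refine ⟨c.re, c.im, hc.symm, ?_⟩
  have hdvd := im_dvd_im_pow c p
  rwa [hc] at hdvd

theorem stmt_17 (x y : ℤ) (k p : ℕ) (hx : 1 ≤ x) (hy : 1 ≤ y) (hk : 1 ≤ k)
    (hp : p.Prime) (hp5 : 5 ≤ p) (hcop : IsCoprime x y)
    (h : x ^ 2 + 11 ^ (2 * k) = y ^ p) :
    ∃ u v : ℤ, (⟨x, 11 ^ k⟩ : GaussianInt) = (⟨u, v⟩ : GaussianInt) ^ p ∧
      v ∣ (11 : ℤ) ^ k :=
  stmt_17_general x y k p hp hp5 hcop h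
end

section
/- Let α = u + v·i ∈ ℤ[i] with u, v coprime integers, uv ≠ 0, and let u_n = (α^n − ᾱ^n)/(α − ᾱ). If q is a prime dividing u_n for prime n ≥ 5, with q not dividing u_m for any 0 < m < n and q not dividing 4v², then q ≡ (−1 | q) (mod n), where (−1 | q) is the Legendre symbol. -/
/-!
Work in `R = ℤ[i]/(q)`, a ring of characteristic `q`. There `α - ᾱ = 2vi` is a unit, so `α` and
`ᾱ` are units too: otherwise `αᾱ = N(α) ≡ 0`, and `αⁿ = ᾱⁿ` would make both nilpotent. Hence
`β = α/ᾱ` has order exactly `n`. The Frobenius `x ↦ x^q` fixes `ℤ` and sends `i` to `(−1 | q) i`,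
so it fixes `α` and `ᾱ` or swaps them; either way `β^q = β^(−1 | q)`, i.e. `n ∣ q − (−1 | q)`.
-/

open Zsqrtd

section CharP

variable {R : Type*} [CommRing R] {p : ℕ} [Fact p.Prime] [CharP R p]

theorem intCast_pow_char (m : ℤ) : (m : R) ^ p = m := by
  rw [← map_intCast (ZMod.castHom dvd_rfl R), ← map_pow, ZMod.pow_card]

theorem isUnit_intCast_of_not_dvd {m : ℤ} (h : ¬ (p : ℤ) ∣ m) : IsUnit (m : R) := by
  rw [← map_intCast (ZMod.castHom dvd_rfl R)]
  exact (Ne.isUnit ((ZMod.intCast_zmod_eq_zero_iff_dvd m p).not.mpr h)).map _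

end CharP

theorem intCast_eq_zero_or_isUnit {R : Type*} [CommRing R] (p : ℕ) [Fact p.Prime] [CharP R p]
    (m : ℤ) : (m : R) = 0 ∨ IsUnit (m : R) := by
  by_cases h : (p : ℤ) ∣ m
  · exact .inl ((CharP.intCast_eq_zero_iff R p m).mpr h)
  · exact .inr (isUnit_intCast_of_not_dvd h)

theorem mul_ne_zero_of_pow_eq_pow {R : Type*} [CommRing R] [Nontrivial R] {a b : R} {n : ℕ}
    (hn : n ≠ 0) (hpow : a ^ n = b ^ n) (hsub : IsUnit (a - b)) : a * b ≠ 0 := by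
  intro hab
  obtain ⟨k, rfl⟩ : ∃ k, n = k + 1 := ⟨n - 1, by omega⟩
  have ha : IsNilpotent a := ⟨k + 2, by linear_combination a * hpow + b ^ k * hab⟩
  have hb : IsNilpotent b := ⟨k + 2, by linear_combination -b * hpow + a ^ k * hab⟩
  exact ((Commute.all a b).isNilpotent_sub ha hb).not_isUnit hsub

namespace GaussianInt

theorem sqrtd_mul_self : (sqrtd : GaussianInt) * sqrtd = -1 := by
  rw [dmuld]; rfl

theorem natCast_mem_nonunits {q : ℕ} (hq : q ≠ 1) : (q : GaussianInt) ∈ nonunits GaussianInt :=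
  fun h => by
    have h1 : ((q : ℤ) : GaussianInt) ∣ ((1 : ℤ) : GaussianInt) := by
      simpa using isUnit_iff_dvd_one.mp h
    rw [intCast_dvd_intCast] at h1
    exact hq (by exact_mod_cast Int.eq_one_of_dvd_one (by positivity) h1)

theorem sub_star_eq_two_im_mul_sqrtd (x : GaussianInt) :
    x - star x = ((2 * x.im : ℤ) : GaussianInt) * sqrtd := by
  ext <;> simp; ring

variable {R : Type*} [CommRing R] {p : ℕ} [Fact p.Prime] [CharP R p] (f : GaussianInt →+* R)

omit [CharP R p] in
theorem map_sqrtd_pow_char (hp : p ≠ 2) : f sqrtd ^ p = (legendreSym p (-1) : R) * f sqrtd := by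
  have hodd : p % 2 = 1 := Nat.odd_iff.mp ((Fact.out : p.Prime).odd_of_ne_two hp)
  have hsq : f sqrtd ^ 2 = -1 := by rw [sq, ← map_mul, sqrtd_mul_self, map_neg, map_one]
  conv_lhs => rw [← Nat.div_add_mod p 2, hodd, pow_succ, pow_mul, hsq]
  rw [legendreSym.at_neg_one hp, ZMod.χ₄_eq_neg_one_pow hodd]
  push_cast
  rfl

theorem map_pow_char (hp : p ≠ 2) (x : GaussianInt) :
    f x ^ p = f ⟨x.re, legendreSym p (-1) * x.im⟩ := by
  obtain ⟨a, b⟩ := x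
  dsimp only
  rw [decompose, decompose, map_add, map_add, map_mul, map_mul, add_pow_char, mul_pow,
    map_sqrtd_pow_char f hp]
  simp only [map_intCast, intCast_pow_char]
  push_cast
  ring

theorem map_pow_char_of_legendreSym_eq_one (hp : p ≠ 2) (h : legendreSym p (-1) = 1)
    (x : GaussianInt) : f x ^ p = f x := by
  rw [map_pow_char f hp, h, one_mul]

theorem map_pow_char_of_legendreSym_eq_neg_one (hp : p ≠ 2) (h : legendreSym p (-1) = -1)
    (x : GaussianInt) : f x ^ p = f (star x) := by
  rw [map_pow_char f hp, h, neg_one_mul]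
  rfl

theorem isUnit_map_sqrtd : IsUnit (f sqrtd) :=
  IsUnit.of_mul_eq_one (-f sqrtd) <| by
    rw [mul_neg, ← map_mul, sqrtd_mul_self, map_neg, map_one, neg_neg]

theorem isUnit_map_sub_star {x : GaussianInt} (h : ¬ (p : ℤ) ∣ 2 * x.im) :
    IsUnit (f (x - star x)) := by
  rw [sub_star_eq_two_im_mul_sqrtd, map_mul, map_intCast]
  exact (isUnit_intCast_of_not_dvd h).mul (isUnit_map_sqrtd f)

theorem zpow_char_eq_zpow_legendreSym (hp : p ≠ 2) {x : GaussianInt} {A B : Rˣ}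
    (hA : (A : R) = f x) (hB : (B : R) = f (star x)) :
    (A * B⁻¹) ^ (p : ℤ) = (A * B⁻¹) ^ legendreSym p (-1) := by
  rcases legendreSym.eq_one_or_neg_one p (a := -1) (by simp) with h | h
  · have hfrob := map_pow_char_of_legendreSym_eq_one f hp h
    have hAp : A ^ p = A := Units.ext (by simp [hA, hfrob])
    have hBp : B ^ p = B := Units.ext (by simp [hB, hfrob])
    rw [h, zpow_natCast, zpow_one, mul_pow, inv_pow, hAp, hBp]
  · have hfrob := map_pow_char_of_legendreSym_eq_neg_one f hp h
    have hAp : A ^ p = B := Units.ext (by simp [hA, hB, hfrob])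
    have hBp : B ^ p = A := Units.ext (by simp [hA, hB, hfrob])
    rw [h, zpow_natCast, zpow_neg_one, mul_pow, inv_pow, hAp, hBp, mul_inv_rev, inv_inv, mul_comm]

theorem modEq_legendreSym_of_map_pow_eq (hp : p ≠ 2) {x : GaussianInt} {n : ℕ} (hn : n.Prime)
    (hpow : f x ^ n = f (star x) ^ n) (hsub : IsUnit (f (x - star x))) :
    (p : ℤ) ≡ legendreSym p (-1) [ZMOD n] := by
  have : Fact n.Prime := ⟨hn⟩
  have : Nontrivial R := CharP.nontrivial_of_char_ne_one (Fact.out : p.Prime).one_lt.ne'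
  rw [map_sub] at hsub
  have hnorm : f x * f (star x) = (x.norm : R) := by
    rw [← map_mul, ← norm_eq_mul_conj, map_intCast]
  have hunit : IsUnit (f x * f (star x)) := by
    rw [hnorm]
    refine (intCast_eq_zero_or_isUnit p x.norm).resolve_left ?_
    rw [← hnorm]
    exact mul_ne_zero_of_pow_eq_pow hn.ne_zero hpow hsub
  obtain ⟨⟨A, hA⟩, ⟨B, hB⟩⟩ := IsUnit.mul_iff.mp hunit
  have hβn : (A * B⁻¹) ^ n = 1 := by
    rw [mul_pow, inv_pow, mul_inv_eq_one, Units.ext_iff, Units.val_pow_eq_pow_val,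
      Units.val_pow_eq_pow_val, hA, hB, hpow]
  have hβ1 : A * B⁻¹ ≠ 1 := by
    rw [Ne, mul_inv_eq_one, Units.ext_iff, hA, hB, ← sub_eq_zero]
    exact hsub.ne_zero
  have hdvd : (orderOf (A * B⁻¹) : ℤ) ∣ p - legendreSym p (-1) := by
    rw [orderOf_dvd_iff_zpow_eq_one, zpow_sub, zpow_char_eq_zpow_legendreSym f hp hA hB,
      mul_inv_cancel]
  rw [orderOf_eq_prime hβn hβ1] at hdvd
  exact (Int.modEq_iff_dvd.mpr hdvd).symm

end GaussianInt

open GaussianInt in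
theorem stmt_18_general (u v : ℤ)
    (α : GaussianInt) (hα : α = ⟨u, v⟩)
    (U : ℕ → ℤ)
    (hU : ∀ n : ℕ, (U n : GaussianInt) * (α - star α) = α ^ n - (star α) ^ n)
    (n q : ℕ) (hn : n.Prime) (hq : q.Prime)
    (hdvd : (q : ℤ) ∣ U n)
    (hv : ¬ (q : ℤ) ∣ 4 * v ^ 2) :
    (q : ℤ) ≡ @legendreSym q ⟨hq⟩ (-1) [ZMOD n] := by
  have : Fact q.Prime := ⟨hq⟩
  have : CharP (GaussianInt ⧸ Ideal.span {(q : GaussianInt)}) q :=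
    CharP.quotient _ q (natCast_mem_nonunits hq.ne_one)
  have h2v : ¬ (q : ℤ) ∣ 2 * v := fun h => hv (h.trans ⟨2 * v, by ring⟩)
  have hq2 : q ≠ 2 := by
    rintro rfl
    exact h2v (dvd_mul_right 2 v)
  set f := Ideal.Quotient.mk (Ideal.span {(q : GaussianInt)})
  refine modEq_legendreSym_of_map_pow_eq f hq2 (x := α) hn ?_ ?_
  · have hUn : f (U n) = 0 := by
      rw [map_intCast, CharP.intCast_eq_zero_iff _ q]
      exact hdvd
    rw [← sub_eq_zero, ← map_pow, ← map_pow, ← map_sub, ← hU, map_mul, hUn, zero_mul]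
  · exact isUnit_map_sub_star f (by rwa [hα])

theorem stmt_18 (u v : ℤ) (hcop : IsCoprime u v) (hne : u * v ≠ 0)
    (α : GaussianInt) (hα : α = ⟨u, v⟩)
    (U : ℕ → ℤ)
    (hU : ∀ n : ℕ, (U n : GaussianInt) * (α - star α) = α ^ n - (star α) ^ n)
    (n q : ℕ) (hn : n.Prime) (hn5 : 5 ≤ n) (hq : q.Prime)
    (hdvd : (q : ℤ) ∣ U n)
    (hprim : ∀ m : ℕ, 0 < m → m < n → ¬ (q : ℤ) ∣ U m)
    (hv : ¬ (q : ℤ) ∣ 4 * v ^ 2) :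
    (q : ℤ) ≡ @legendreSym q ⟨hq⟩ (-1) [ZMOD n] :=
  stmt_18_general u v α hα U hU n q hn hq hdvd hv
end
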